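/- arXiv:2302.07686 — 2 statements merged into one kernel-verified Lean document; each statement's English description precedes it below -/
import Mathlib

section
/- Every quasifinite ℤ-set S all of whose points have nontrivial (i.e., proper) stabilizer in the sense that no point is fixed by all of ℤ — equivalently every orbit has size at least 2 — admits a ℤ-equivariant map to the quasifinite ℤ-set S_wt = ⨆_{p prime} ℤ/pℤ. In other words, S_wt is weakly terminal in the category of quasifinite ℤ-sets with proper isotropy. -/
/-!
The stabilizer of a point is `nℤ` with `n ≠ 1`, so `n` has a prime factor `p` (when `n = 0`
any prime will do, and indeed `Nat.minFac 0 = 2`). Fixing a representative `r` of each orbit,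
`k +ᵥ r ↦ k mod p` is then a well-defined equivariant map from that orbit onto `ℤ/pℤ`.
-/

/-- A `ℤ`-set is quasifinite if every stabilizer is cofinite (finite index) and the fixed-point
set of every cofinite subgroup is finite. -/
def IsQuasifiniteZ (S : Type*) [AddAction ℤ S] : Prop :=
  (∀ s : S, (AddAction.stabilizer ℤ s).FiniteIndex) ∧
    ∀ H : AddSubgroup ℤ, H.FiniteIndex → {s : S | ∀ k ∈ H, k +ᵥ s = s}.Finite

open AddAction

theorem Int.mem_addSubgroup_iff_index_dvd (H : AddSubgroup ℤ) {k : ℤ} :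
    k ∈ H ↔ (H.index : ℤ) ∣ k := by
  obtain ⟨a, rfl⟩ := Int.subgroup_cyclic H
  rw [← AddSubgroup.zmultiples_eq_closure, Int.index_zmultiples, Int.mem_zmultiples_iff,
    Int.natAbs_dvd]

theorem AddAction.index_stabilizer_ne_one {G α : Type*} [AddGroup G] [AddAction G α] {a : α}
    (h : ∃ g : G, g +ᵥ a ≠ a) : (stabilizer G a).index ≠ 1 := by
  obtain ⟨g, hg⟩ := h
  rw [Ne, AddSubgroup.index_eq_one]
  exact fun htop => hg (show g ∈ stabilizer G a from htop ▸ AddSubgroup.mem_top g)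

theorem AddAction.exists_equivariant_map_to_sigma_zmod {S ι : Type*} [AddAction ℤ S]
    (n : ι → ℕ) (i : S → ι) (hi : ∀ (k : ℤ) (s : S), i (k +ᵥ s) = i s)
    (hdvd : ∀ (s : S) (k : ℤ), k +ᵥ s = s → (n (i s) : ℤ) ∣ k) :
    ∃ f : S → Σ j, ZMod (n j), ∀ (k : ℤ) (s : S), f (k +ᵥ s) = ⟨(f s).1, (f s).2 + k⟩ := by
  let r (s : S) : S := (Quotient.mk (orbitRel ℤ S) s).out
  have r_vadd (k : ℤ) (s : S) : r (k +ᵥ s) = r s :=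
    congrArg Quotient.out (Quotient.sound (mem_orbit s k))
  have exists_vadd_r (s : S) : ∃ c : ℤ, c +ᵥ r s = s :=
    mem_orbit_iff.mp (mem_orbit_symm.mp (Quotient.mk_out (s := orbitRel ℤ S) s))
  choose c hc using exists_vadd_r
  refine ⟨fun s => ⟨i s, c s⟩, fun k s => ?_⟩
  have i_r : i (r s) = i s := by rw [← hi (c s), hc]
  have hsame : (c s + k) +ᵥ r s = c (k +ᵥ s) +ᵥ r s := by
    rw [add_comm, add_vadd, hc, ← r_vadd k, hc]
  have hc_vadd : ((c (k +ᵥ s) : ℤ) : ZMod (n (i s))) = c s + k := by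
    rw [← Int.cast_add, ZMod.intCast_eq_intCast_iff_dvd_sub, ← i_r]
    refine hdvd (r s) _ ?_
    rw [sub_eq_neg_add, add_vadd, hsame, ← add_vadd, neg_add_cancel, zero_vadd]
  dsimp only
  rw [hi, hc_vadd]

theorem exists_equivariant_map_to_weaklyTerminal_general (S : Type*) [AddAction ℤ S]
    (hp : ∀ s : S, ∃ k : ℤ, k +ᵥ s ≠ s) :
    ∃ f : S → Σ p : Nat.Primes, ZMod (p : ℕ),
      ∀ (k : ℤ) (s : S),
        f (k +ᵥ s) = ⟨(f s).1, (f s).2 + (k : ZMod ((f s).1 : ℕ))⟩ := by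
  let P (s : S) : Nat.Primes :=
    ⟨(stabilizer ℤ s).index.minFac, Nat.minFac_prime (index_stabilizer_ne_one (hp s))⟩
  refine exists_equivariant_map_to_sigma_zmod (fun p : Nat.Primes => (p : ℕ)) P
    (fun k s => ?_) (fun s k hk => ?_)
  · exact Subtype.ext <|
      congrArg (fun H : AddSubgroup ℤ => H.index.minFac) (stabilizer_vadd_eq_right k s)
  · exact (Int.natCast_dvd_natCast.2 (Nat.minFac_dvd _)).trans
      ((Int.mem_addSubgroup_iff_index_dvd _).1 hk)

/-- Every quasifinite `ℤ`-set with proper isotropy admits a `ℤ`-equivariant map to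
`S_wt = ⨆_{p prime} ℤ/pℤ` (where `ℤ` acts on the target by translation in each summand). -/
theorem exists_equivariant_map_to_weaklyTerminal (S : Type*) [AddAction ℤ S]
    (hq : IsQuasifiniteZ S) (hp : ∀ s : S, ∃ k : ℤ, k +ᵥ s ≠ s) :
    ∃ f : S → Σ p : Nat.Primes, ZMod (p : ℕ),
      ∀ (k : ℤ) (s : S),
        f (k +ᵥ s) = ⟨(f s).1, (f s).2 + (k : ZMod ((f s).1 : ℕ))⟩ :=
  exists_equivariant_map_to_weaklyTerminal_general S hp
end

section
/- Let … → S₂ → S₁ → S₀ be a sequence of proper ℤ-equivariant maps between nonempty quasifinite ℤ-sets, where a map f is proper if for every x the stabilizer of f(x) strictly contains the stabilizer of x. Then every point of S_i has stabilizer of index at least 2^i in ℤ, and consequently the disjoint union ⨆_{i ≥ 1} S_i is again a quasifinite ℤ-set. -/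
/-- The `ℤ`-action on a disjoint union of `ℤ`-sets. -/
def sigmaAddAction (S : ℕ → Type*) [∀ i, AddAction ℤ (S i)] :
    AddAction ℤ (Σ i, S i) where
  vadd m x := ⟨x.1, m +ᵥ x.2⟩
  zero_vadd := by
    rintro ⟨i, x⟩
    exact congrArg (Sigma.mk i) (zero_vadd ℤ x)
  add_vadd a b := by
    rintro ⟨i, x⟩
    exact congrArg (Sigma.mk i) (add_vadd a b x)

/-!
Passing along a proper map at least halves the index of a stabilizer: if `Stab x < Stab (f x)` then
`[G : Stab x] = [Stab (f x) : Stab x] · [G : Stab (f x)]` with a first factor at least `2`.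
Along a tower of `i` proper maps the index therefore grows by a factor `2 ^ i`, so a finite-index subgroup
`H` can only fix points of the summands `S i` with `2 ^ i ≤ [ℤ : H]`, which are finitely many.
-/

open AddAction

theorem AddSubgroup.two_mul_index_le_of_lt {G : Type*} [AddGroup G] {H K : AddSubgroup G}
    (hHK : H < K) (hH : H.index ≠ 0) : 2 * K.index ≤ H.index := by
  have hmul := AddSubgroup.relIndex_mul_index hHK.le
  have hne_one : H.relIndex K ≠ 1 := fun h => hHK.not_ge (AddSubgroup.relIndex_eq_one.mp h)
  have hne_zero : H.relIndex K ≠ 0 := fun h => hH (by rw [← hmul, h, zero_mul])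
  rw [← hmul]
  exact Nat.mul_le_mul_right _ (by omega)

theorem two_pow_le_index_stabilizer_of_lt {G : Type*} [AddGroup G] {S : ℕ → Type*}
    [∀ i, AddAction G (S i)] (hfin : ∀ i (x : S i), (stabilizer G x).FiniteIndex)
    (f : ∀ i, S (i + 1) → S i) (hf : ∀ i (x : S (i + 1)), stabilizer G x < stabilizer G (f i x)) :
    ∀ i (x : S i), 2 ^ i ≤ (stabilizer G x).index
  | 0, x => Nat.one_le_iff_ne_zero.mpr (hfin 0 x).index_ne_zero
  | i + 1, x =>
    calc 2 ^ (i + 1) = 2 * 2 ^ i := pow_succ' 2 i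
      _ ≤ 2 * (stabilizer G (f i x)).index :=
        Nat.mul_le_mul_left 2 (two_pow_le_index_stabilizer_of_lt hfin f hf i (f i x))
      _ ≤ (stabilizer G x).index :=
        AddSubgroup.two_mul_index_le_of_lt (hf i x) (hfin (i + 1) x).index_ne_zero

section Sigma

variable {S : ℕ → Type*} [∀ i, AddAction ℤ (S i)]

attribute [local instance] sigmaAddAction

theorem sigmaMk_vadd_eq_self_iff {i : ℕ} {x : S i} {k : ℤ} :
    k +ᵥ (⟨i, x⟩ : Σ i, S i) = ⟨i, x⟩ ↔ k +ᵥ x = x :=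
  ⟨fun h => eq_of_heq (Sigma.mk.inj_iff.mp h).2, congrArg (Sigma.mk i)⟩

theorem stabilizer_sigmaMk (i : ℕ) (x : S i) :
    stabilizer ℤ (⟨i, x⟩ : Σ i, S i) = stabilizer ℤ x :=
  AddSubgroup.ext fun _ => sigmaMk_vadd_eq_self_iff

theorem isQuasifiniteZ_sigma (hq : ∀ i, IsQuasifiniteZ (S i))
    (hfix : ∀ H : AddSubgroup ℤ, H.FiniteIndex → {i | ∃ x : S i, ∀ k ∈ H, k +ᵥ x = x}.Finite) :
    IsQuasifiniteZ (Σ i, S i) := by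
  refine ⟨fun ⟨i, x⟩ => stabilizer_sigmaMk i x ▸ (hq i).1 x, fun H hH => ?_⟩
  refine ((hfix H hH).biUnion fun i _ => ((hq i).2 H hH).image (Sigma.mk i)).subset ?_
  rintro ⟨i, x⟩ hx
  have hx' : ∀ k ∈ H, k +ᵥ x = x := fun k hk => sigmaMk_vadd_eq_self_iff.mp (hx k hk)
  exact Set.mem_biUnion ⟨x, hx'⟩ ⟨x, hx', rfl⟩

end Sigma

theorem proper_tower_quasifinite_general (S : ℕ → Type*) [∀ i, AddAction ℤ (S i)]
    (hq : ∀ i, IsQuasifiniteZ (S i))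
    (f : ∀ i, S (i + 1) → S i)
    (hfp : ∀ (i : ℕ) (x : S (i + 1)),
      AddAction.stabilizer ℤ x < AddAction.stabilizer ℤ (f i x)) :
    (∀ (i : ℕ) (x : S i), 2 ^ i ≤ (AddAction.stabilizer ℤ x).index) ∧
      @IsQuasifiniteZ (Σ i, S i) (sigmaAddAction S) := by
  have hindex := two_pow_le_index_stabilizer_of_lt (fun i => (hq i).1) f hfp
  refine ⟨hindex, isQuasifiniteZ_sigma hq fun H hH => (Set.finite_Iio H.index).subset ?_⟩
  rintro i ⟨x, hx⟩
  have hle : H ≤ stabilizer ℤ x := hx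
  exact Nat.lt_two_pow_self.trans_le ((hindex i x).trans (AddSubgroup.index_antitone hle))

theorem proper_tower_quasifinite (S : ℕ → Type*) [∀ i, AddAction ℤ (S i)]
    (hq : ∀ i, IsQuasifiniteZ (S i)) (hne : ∀ i, Nonempty (S i))
    (f : ∀ i, S (i + 1) → S i)
    (hfe : ∀ (i : ℕ) (k : ℤ) (x : S (i + 1)), f i (k +ᵥ x) = k +ᵥ f i x)
    (hfp : ∀ (i : ℕ) (x : S (i + 1)),
      AddAction.stabilizer ℤ x < AddAction.stabilizer ℤ (f i x)) :
    (∀ (i : ℕ) (x : S i), 2 ^ i ≤ (AddAction.stabilizer ℤ x).index) ∧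
      @IsQuasifiniteZ (Σ i, S i) (sigmaAddAction S) :=
  proper_tower_quasifinite_general S hq f hfp
end
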